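/- Let n ≥ 2, p ≥ n, and let x_1, …, x_{p-n+1} be indeterminates. Define the square matrix E indexed by I⁺(n,p) = {ξ ∈ ℕ^n : ξ_i ≥ 1, ∑ξ_i ≤ p} by E_{ij} = ∏_{l=1}^n x_{ξ_{j,l}}^{ξ_{i,l}}. Then det E = C · ∏_{j=1}^{p-n+1} x_j^{Λ(j)} · ∏_{1≤i<j≤p-n+1} (x_j - x_i)^{Λ(j)} for some nonzero constant C, where Λ(j) = Λ_{I⁺(n,p)}(j) is the total number of occurrences of j among coordinates of elements of I⁺(n,p). In particular, det E is nonzero whenever the x_j are nonzero and pairwise distinct. -/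

import Mathlib

/-- The set I⁺(n,p) of vectors in ℕ^n with strictly positive coordinates and
coordinate sum at most p. -/
def Iplus (n p : ℕ) : Finset (Fin n → ℕ) :=
  ((Finset.range (p + 1)).biUnion (fun m => Finset.Nat.antidiagonalTuple n m)).filter
    (fun ξ => ∀ i, 1 ≤ ξ i)

/-- Λ_{I⁺(n,p)}(j): total number of occurrences of j among coordinates of
vectors in I⁺(n,p). -/
def Lam (n p j : ℕ) : ℕ :=
  ∑ ξ ∈ Iplus n p, (Finset.univ.filter (fun i => ξ i = j)).card

/-!
Write `Q_m = X · ∏_{1 ≤ k < m} (X - x_k)`, the monic Newton polynomial of degree `m` with nodes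
`0, x_1, …, x_{m-1}`. Multiplying `E` on the left by the matrix of coefficients of the products
`∏_l Q_{ξ_l}` gives the matrix of values `∏_l Q_{ξ_l}(x_{η_l})`. The coefficient matrix is
unitriangular and the value matrix vanishes unless `ξ ≤ η` coordinatewise, so
`det E = ∏_ξ ∏_l x_{ξ_l} ∏_{k < ξ_l} (x_{ξ_l} - x_k)`; grouping the factors by the value
`j = ξ_l` gives the claimed product with `C = 1`.
-/

open Finset Polynomial

theorem Equiv.Perm.eq_one_of_forall_apply_le {α : Type*} [Finite α] [PartialOrder α]
    {σ : Equiv.Perm α} (h : ∀ i, σ i ≤ i) : σ = 1 := by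
  ext i
  have hiter : ∀ k, (σ ^ (k + 1)) i ≤ σ i := by
    intro k
    induction k with
    | zero => simp
    | succ k ih => rw [pow_succ', Equiv.Perm.mul_apply]; exact (h _).trans ih
  have hcycle := hiter (orderOf σ - 1)
  rw [Nat.sub_add_cancel (orderOf_pos σ), pow_orderOf_eq_one, Equiv.Perm.one_apply] at hcycle
  exact le_antisymm (h i) hcycle

theorem Matrix.det_eq_prod_diag_of_ne_zero_le {m R : Type*} [Fintype m] [DecidableEq m]
    [PartialOrder m] [CommRing R] {M : Matrix m m R} (h : ∀ i j, M i j ≠ 0 → i ≤ j) :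
    M.det = ∏ i, M i i := by
  rw [det_apply, sum_eq_single 1 _ (by simp)]
  · simp
  intro σ _ hσ
  obtain ⟨i, hi⟩ : ∃ i, M (σ i) i = 0 := by
    by_contra! hne
    exact hσ (Equiv.Perm.eq_one_of_forall_apply_le fun i => h _ _ (hne i))
  rw [prod_eq_zero (f := fun j => M (σ j) j) (mem_univ i) hi, smul_zero]

theorem Polynomial.prod_eval_eq_sum_prod_coeff {ι R : Type*} [Fintype ι] [DecidableEq ι]
    [CommSemiring R] (P : ι → R[X]) (y : ι → R) (s : Finset (ι → ℕ))
    (hs : ∀ v : ι → ℕ, (∀ i, v i ∈ (P i).support) → v ∈ s) :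
    ∏ i, (P i).eval (y i) = ∑ v ∈ s, ∏ i, (P i).coeff (v i) * y i ^ v i := by
  calc ∏ i, (P i).eval (y i) = ∏ i, ∑ e ∈ (P i).support, (P i).coeff e * y i ^ e := by
        simp only [eval_eq_sum, Polynomial.sum_def]
    _ = ∑ v ∈ Fintype.piFinset fun i => (P i).support, ∏ i, (P i).coeff (v i) * y i ^ v i :=
        prod_univ_sum _ _
    _ = ∑ v ∈ s, ∏ i, (P i).coeff (v i) * y i ^ v i := by
        refine sum_subset (fun v hv => hs v (Fintype.mem_piFinset.1 hv)) fun v _ hv => ?_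
        obtain ⟨i, hi⟩ : ∃ i, v i ∉ (P i).support := by
          simpa [Fintype.mem_piFinset] using hv
        rw [prod_eq_zero (mem_univ i) (by rw [notMem_support_iff.1 hi, zero_mul])]

theorem mem_Iplus {n p : ℕ} {ξ : Fin n → ℕ} :
    ξ ∈ Iplus n p ↔ (∀ i, 1 ≤ ξ i) ∧ ∑ i, ξ i ≤ p := by
  simp [Iplus, Finset.Nat.mem_antidiagonalTuple, and_comm]

theorem one_le_of_mem_Iplus {n p : ℕ} (ξ : Iplus n p) (l : Fin n) : 1 ≤ ξ.1 l :=
  (mem_Iplus.1 ξ.2).1 l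

theorem mem_Icc_of_mem_Iplus {n p : ℕ} {ξ : Fin n → ℕ} (hξ : ξ ∈ Iplus n p) (l : Fin n) :
    ξ l ∈ Icc 1 (p - n + 1) := by
  obtain ⟨hpos, hsum⟩ := mem_Iplus.1 hξ
  have hrest : n - 1 ≤ ∑ i ∈ univ.erase l, ξ i := by
    simpa using card_nsmul_le_sum (univ.erase l) ξ 1 fun i _ => hpos i
  have := add_sum_erase univ ξ (mem_univ l)
  have := hpos l
  rw [mem_Icc]
  omega

theorem prod_Iplus_prod_apply {M : Type*} [CommMonoid M] (n p : ℕ) (g : ℕ → M) :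
    ∏ ξ ∈ Iplus n p, ∏ l, g (ξ l) = ∏ j ∈ Icc 1 (p - n + 1), g j ^ Lam n p j := by
  calc ∏ ξ ∈ Iplus n p, ∏ l, g (ξ l)
      = ∏ ξ ∈ Iplus n p, ∏ j ∈ Icc 1 (p - n + 1), g j ^ #{l | ξ l = j} :=
        prod_congr rfl fun ξ hξ => by
          rw [← prod_fiberwise_of_maps_to' (fun l _ => mem_Icc_of_mem_Iplus hξ l) g]
          exact prod_congr rfl fun j _ => prod_const _
    _ = ∏ j ∈ Icc 1 (p - n + 1), g j ^ Lam n p j := by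
        rw [prod_comm]
        exact prod_congr rfl fun j _ => prod_pow_eq_pow_sum _ _ _

section NewtonPoly

variable {R : Type*} [CommRing R] (x : ℕ → R)

noncomputable def newtonPoly (m : ℕ) : R[X] :=
  X * ∏ k ∈ Ico 1 m, (X - C (x k))

theorem monic_newtonPoly (m : ℕ) : (newtonPoly x m).Monic :=
  monic_X.mul (monic_prod_of_monic _ _ fun _ _ => monic_X_sub_C _)

theorem natDegree_newtonPoly [Nontrivial R] {m : ℕ} (hm : 1 ≤ m) :
    (newtonPoly x m).natDegree = m := by
  rw [newtonPoly, monic_X.natDegree_mul (monic_prod_of_monic _ _ fun _ _ => monic_X_sub_C _),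
    natDegree_X, natDegree_prod_of_monic _ _ fun _ _ => monic_X_sub_C _]
  simp only [natDegree_X_sub_C, sum_const, Nat.card_Ico, smul_eq_mul, mul_one]
  omega

theorem coeff_newtonPoly_self {m : ℕ} (hm : 1 ≤ m) : (newtonPoly x m).coeff m = 1 := by
  nontriviality R
  simpa [natDegree_newtonPoly x hm] using (monic_newtonPoly x m).coeff_natDegree

theorem mem_Icc_of_coeff_newtonPoly_ne_zero {m j : ℕ} (hm : 1 ≤ m)
    (hj : (newtonPoly x m).coeff j ≠ 0) : j ∈ Icc 1 m := by
  nontriviality R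
  refine mem_Icc.2 ⟨Nat.one_le_iff_ne_zero.2 fun h0 => hj ?_, ?_⟩
  · rw [h0, newtonPoly, mul_coeff_zero, coeff_X_zero, zero_mul]
  · exact natDegree_newtonPoly x hm ▸ le_natDegree_of_ne_zero hj

theorem eval_newtonPoly (m : ℕ) (y : R) :
    (newtonPoly x m).eval y = y * ∏ k ∈ Ico 1 m, (y - x k) := by
  simp [newtonPoly, eval_prod]

theorem eval_newtonPoly_eq_zero {m j : ℕ} (hj : j ∈ Ico 1 m) :
    (newtonPoly x m).eval (x j) = 0 := by
  rw [eval_newtonPoly, prod_eq_zero hj (sub_self _), mul_zero]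

end NewtonPoly

section Matrices

variable {R : Type*} [CommRing R] (x : ℕ → R) (n p : ℕ)

def monomialMatrix : Matrix (Iplus n p) (Iplus n p) R :=
  Matrix.of fun ξ η => ∏ l, x (η.1 l) ^ ξ.1 l

noncomputable def newtonCoeffMatrix : Matrix (Iplus n p) (Iplus n p) R :=
  Matrix.of fun ξ κ => ∏ l, (newtonPoly x (ξ.1 l)).coeff (κ.1 l)

noncomputable def newtonEvalMatrix : Matrix (Iplus n p) (Iplus n p) R :=
  Matrix.of fun ξ η => ∏ l, (newtonPoly x (ξ.1 l)).eval (x (η.1 l))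

theorem newtonEvalMatrix_eq_mul :
    newtonEvalMatrix x n p = newtonCoeffMatrix x n p * monomialMatrix x n p := by
  ext ξ η
  have hsupp : ∀ v : Fin n → ℕ,
      (∀ l, v l ∈ (newtonPoly x (ξ.1 l)).support) → v ∈ Iplus n p := by
    intro v hv
    have hv' l := mem_Icc.1 <| mem_Icc_of_coeff_newtonPoly_ne_zero x (one_le_of_mem_Iplus ξ l)
      (mem_support_iff.1 (hv l))
    exact mem_Iplus.2 ⟨fun l => (hv' l).1,
      (sum_le_sum fun l _ => (hv' l).2).trans (mem_Iplus.1 ξ.2).2⟩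
  rw [newtonEvalMatrix, Matrix.of_apply, prod_eval_eq_sum_prod_coeff _ _ _ hsupp,
    Matrix.mul_apply, ← sum_coe_sort (Iplus n p)]
  simp only [newtonCoeffMatrix, monomialMatrix, Matrix.of_apply, prod_mul_distrib]

theorem le_of_newtonCoeffMatrix_ne_zero {ξ κ : Iplus n p}
    (h : newtonCoeffMatrix x n p ξ κ ≠ 0) : κ ≤ ξ := fun l =>
  (mem_Icc.1 (mem_Icc_of_coeff_newtonPoly_ne_zero x (one_le_of_mem_Iplus ξ l)
    fun h0 => h (prod_eq_zero (mem_univ l) h0))).2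

theorem le_of_newtonEvalMatrix_ne_zero {ξ η : Iplus n p}
    (h : newtonEvalMatrix x n p ξ η ≠ 0) : ξ ≤ η := fun l => by
  by_contra! hlt
  exact h (prod_eq_zero (mem_univ l)
    (eval_newtonPoly_eq_zero x (mem_Ico.2 ⟨one_le_of_mem_Iplus η l, hlt⟩)))

theorem det_newtonCoeffMatrix : (newtonCoeffMatrix x n p).det = 1 := by
  rw [← Matrix.det_transpose,
    Matrix.det_eq_prod_diag_of_ne_zero_le (M := (newtonCoeffMatrix x n p).transpose)
      fun _ _ h => le_of_newtonCoeffMatrix_ne_zero x n p h]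
  exact prod_eq_one fun ξ _ => prod_eq_one (s := univ) fun l _ =>
    coeff_newtonPoly_self x (one_le_of_mem_Iplus ξ l)

theorem det_monomialMatrix :
    (monomialMatrix x n p).det =
      (∏ j ∈ Icc 1 (p - n + 1), x j ^ Lam n p j) *
        ∏ j ∈ Icc 1 (p - n + 1), ∏ i ∈ Ico 1 j, (x j - x i) ^ Lam n p j := by
  calc (monomialMatrix x n p).det = (newtonEvalMatrix x n p).det := by
        rw [newtonEvalMatrix_eq_mul, Matrix.det_mul, det_newtonCoeffMatrix, one_mul]
    _ = ∏ ξ, newtonEvalMatrix x n p ξ ξ :=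
        Matrix.det_eq_prod_diag_of_ne_zero_le fun _ _ h => le_of_newtonEvalMatrix_ne_zero x n p h
    _ = ∏ ξ ∈ Iplus n p, ∏ l, x (ξ l) * ∏ k ∈ Ico 1 (ξ l), (x (ξ l) - x k) := by
        rw [← prod_coe_sort (Iplus n p)]
        simp only [newtonEvalMatrix, Matrix.of_apply, eval_newtonPoly]
    _ = ∏ j ∈ Icc 1 (p - n + 1), (x j * ∏ k ∈ Ico 1 j, (x j - x k)) ^ Lam n p j :=
        prod_Iplus_prod_apply n p fun j => x j * ∏ k ∈ Ico 1 j, (x j - x k)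
    _ = _ := by simp only [mul_pow, prod_mul_distrib, prod_pow]

end Matrices

theorem detE_factorization_general (n p : ℕ) :
    ∃ C : ℚ, C ≠ 0 ∧
      (∀ x : ℕ → ℚ,
        Matrix.det (fun ξ η : ↥(Iplus n p) =>
            ∏ l, x ((η : Fin n → ℕ) l) ^ ((ξ : Fin n → ℕ) l)) =
          C * (∏ j ∈ Finset.Icc 1 (p - n + 1), x j ^ Lam n p j) *
            ∏ j ∈ Finset.Icc 1 (p - n + 1), ∏ i ∈ Finset.Ico 1 j,
              (x j - x i) ^ Lam n p j) ∧
      (∀ x : ℕ → ℚ,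
        (∀ j ∈ Finset.Icc 1 (p - n + 1), x j ≠ 0) →
        (∀ i ∈ Finset.Icc 1 (p - n + 1), ∀ j ∈ Finset.Icc 1 (p - n + 1),
            i ≠ j → x i ≠ x j) →
        Matrix.det (fun ξ η : ↥(Iplus n p) =>
            ∏ l, x ((η : Fin n → ℕ) l) ^ ((ξ : Fin n → ℕ) l)) ≠ 0) := by
  refine ⟨1, one_ne_zero, fun x => (det_monomialMatrix x n p).trans (by rw [one_mul]),
    fun x hx hinj => ?_⟩
  change (monomialMatrix x n p).det ≠ 0
  rw [det_monomialMatrix]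
  refine mul_ne_zero (prod_ne_zero_iff.2 fun j hj => pow_ne_zero _ (hx j hj))
    (prod_ne_zero_iff.2 fun j hj => prod_ne_zero_iff.2 fun i hi => pow_ne_zero _ ?_)
  have hi' : i ∈ Icc 1 (p - n + 1) := mem_Icc.2 ⟨(mem_Ico.1 hi).1, by grind⟩
  exact sub_ne_zero.2 (hinj j hj i hi' (by grind))

/-- Factorization of the determinant of E, E_{ξη} = ∏_l x_{η_l}^{ξ_l}:
det E = C · ∏_j x_j^{Λ(j)} · ∏_{i<j} (x_j - x_i)^{Λ(j)} with C ≠ 0 a constant;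
in particular det E ≠ 0 when the x_j are nonzero and pairwise distinct. -/
theorem detE_factorization (n p : ℕ) (hn : 2 ≤ n) (hp : n ≤ p) :
    ∃ C : ℚ, C ≠ 0 ∧
      (∀ x : ℕ → ℚ,
        Matrix.det (fun ξ η : ↥(Iplus n p) =>
            ∏ l, x ((η : Fin n → ℕ) l) ^ ((ξ : Fin n → ℕ) l)) =
          C * (∏ j ∈ Finset.Icc 1 (p - n + 1), x j ^ Lam n p j) *
            ∏ j ∈ Finset.Icc 1 (p - n + 1), ∏ i ∈ Finset.Ico 1 j,
              (x j - x i) ^ Lam n p j) ∧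
      (∀ x : ℕ → ℚ,
        (∀ j ∈ Finset.Icc 1 (p - n + 1), x j ≠ 0) →
        (∀ i ∈ Finset.Icc 1 (p - n + 1), ∀ j ∈ Finset.Icc 1 (p - n + 1),
            i ≠ j → x i ≠ x j) →
        Matrix.det (fun ξ η : ↥(Iplus n p) =>
            ∏ l, x ((η : Fin n → ℕ) l) ^ ((ξ : Fin n → ℕ) l)) ≠ 0) :=
  detE_factorization_general n p
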